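/- Let (T n) for n : ℕ be a sequence of tilings of the plane ℝ², i.e., for each n, T n is a family of pairwise disjoint nonempty bounded subsets of ℝ² whose union is all of ℝ². Suppose that for every radius r > 0 there exist an index n and a tile t ∈ T n that contains a closed ball of radius r. Suppose further that the hierarchy is rigid under translations, in the sense that every vector v ∈ ℝ² which is a translation symmetry of T 0 (i.e., {t + v : t ∈ T 0} = T 0) is also a translation symmetry of T n for every n. Then the only translation symmetry of T 0 is v = 0; that is, the tiling T 0 is non-periodic. -/
import Mathlib


/-- Translating a set by a vector `v`. -/
def translateSet (S : Set (EuclideanSpace ℝ (Fin 2))) (v : EuclideanSpace ℝ (Fin 2)) :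
    Set (EuclideanSpace ℝ (Fin 2)) :=
  (· + v) '' S

/-- If `(T n)` is a sequence of tilings of the plane (families of pairwise disjoint, nonempty,
bounded sets covering `ℝ²`), the tiles over all levels contain arbitrarily large closed balls,
and every translation symmetry of `T 0` is a translation symmetry of every `T n`, then the
only translation symmetry of `T 0` is `0`, i.e. `T 0` is non-periodic. -/
theorem nonperiodic_of_hierarchy
    (T : ℕ → Set (Set (EuclideanSpace ℝ (Fin 2))))
    (hdisj : ∀ n, (T n).Pairwise Disjoint)
    (hne : ∀ n, ∀ t ∈ T n, t.Nonempty)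
    (hbdd : ∀ n, ∀ t ∈ T n, Bornology.IsBounded t)
    (hcover : ∀ n, ⋃₀ T n = Set.univ)
    (hbig : ∀ r : ℝ, 0 < r → ∃ n, ∃ t ∈ T n, ∃ c, Metric.closedBall c r ⊆ t)
    (hrigid : ∀ v : EuclideanSpace ℝ (Fin 2),
      (fun t => translateSet t v) '' T 0 = T 0 →
      ∀ n, (fun t => translateSet t v) '' T n = T n) :
    ∀ v : EuclideanSpace ℝ (Fin 2),
      (fun t => translateSet t v) '' T 0 = T 0 → v = 0 := by
  intro v h0
  by_contra hv0
  have hvnorm : 0 < ‖v‖ := norm_pos_iff.mpr hv0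
  obtain ⟨n, t, ht, c, hball⟩ := hbig ‖v‖ hvnorm
  have hsym := hrigid v h0 n
  -- translateSet t v ∈ T n
  have ht' : translateSet t v ∈ T n := by
    rw [← hsym]; exact ⟨t, ht, rfl⟩
  have hcmem : c ∈ t := hball (Metric.mem_closedBall_self (le_of_lt hvnorm))
  have hcv : c + v ∈ t := by
    apply hball
    simp [Metric.mem_closedBall, dist_eq_norm]
  have hcv' : c + v ∈ translateSet t v := ⟨c, hcmem, rfl⟩
  -- t = translateSet t v
  have heq : translateSet t v = t := by
    by_contra hne'
    exact Set.disjoint_left.mp (hdisj n ht' ht hne') hcv' hcv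
  -- t invariant under +v, so c + k•v ∈ t for all k
  have hiter : ∀ k : ℕ, c + (k : ℝ) • v ∈ t := by
    intro k
    induction k with
    | zero => simpa using hcmem
    | succ m ih =>
      have : (c + (m : ℝ) • v) + v ∈ translateSet t v := ⟨_, ih, rfl⟩
      rw [heq] at this
      convert this using 1
      push_cast
      rw [add_smul, one_smul]
      abel
  obtain ⟨R, hR⟩ := (hbdd n t ht).subset_closedBall c
  obtain ⟨k, hk⟩ := exists_nat_gt (R / ‖v‖)
  have hkR : R < (k : ℝ) * ‖v‖ := (div_lt_iff₀ hvnorm).mp hk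
  have hmem := hR (hiter k)
  rw [Metric.mem_closedBall, dist_eq_norm] at hmem
  have : ‖c + (k : ℝ) • v - c‖ = (k : ℝ) * ‖v‖ := by
    simp [norm_smul, abs_of_nonneg (by positivity : (0:ℝ) ≤ (k:ℝ))]
  linarith [hmem, this ▸ hmem]
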